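/- If h is analytic on the unit disk with h(0)=1 and Re h > 0, with Taylor coefficients c_n, then there exists a complex number x with |x| ≤ 1 such that 2c_2 = c_1^2 + x(4 - c_1^2). -/

import Mathlib

/-!
The Cayley transform `ω = (h - 1) / (h + 1)` maps the disk into itself and fixes `0`, so by the
Schwarz lemma `φ = ω / z` maps the disk into its closure. The Schwarz–Pick inequality
`|φ'(0)| ≤ 1 - |φ(0)|²`, with `φ(0) = c₁ / 2` and `φ'(0) = (2c₂ - c₁²) / 4`, becomes
`|2c₂ - c₁²| ≤ 4 - |c₁|² ≤ |4 - c₁²|`, and `x` is the quotient of the two sides.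
-/

open Metric Complex Set Filter Topology ComplexConjugate

noncomputable def blaschkeFactor (a z : ℂ) : ℂ := (z - a) / (1 - conj a * z)

theorem blaschkeFactor_self (a : ℂ) : blaschkeFactor a a = 0 := by
  simp [blaschkeFactor]

theorem one_sub_conj_mul_ne_zero {a z : ℂ} (ha : ‖a‖ < 1) (hz : ‖z‖ < 1) :
    1 - conj a * z ≠ 0 := by
  refine sub_ne_zero.2 fun h => ?_
  have : ‖conj a * z‖ < 1 := by
    rw [norm_mul, norm_conj]
    nlinarith [norm_nonneg a, norm_nonneg z]
  simp [← h] at this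

theorem normSq_one_sub_conj_mul_sub_normSq_sub (a z : ℂ) :
    normSq (1 - conj a * z) - normSq (z - a) = (1 - normSq a) * (1 - normSq z) := by
  simp only [normSq_apply, sub_re, sub_im, mul_re, mul_im, one_re, one_im, conj_re, conj_im]
  ring

theorem norm_blaschkeFactor_lt_one {a z : ℂ} (ha : ‖a‖ < 1) (hz : ‖z‖ < 1) :
    ‖blaschkeFactor a z‖ < 1 := by
  have hden := one_sub_conj_mul_ne_zero ha hz
  rw [blaschkeFactor, norm_div, div_lt_one (norm_pos_iff.2 hden), ← sq_lt_sq₀ (norm_nonneg _)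
    (norm_nonneg _), Complex.sq_norm, Complex.sq_norm, ← sub_pos,
    normSq_one_sub_conj_mul_sub_normSq_sub, ← Complex.sq_norm, ← Complex.sq_norm]
  have := norm_nonneg a
  have := norm_nonneg z
  apply mul_pos <;> nlinarith

theorem hasDerivAt_blaschkeFactor_self {a : ℂ} (ha : ‖a‖ < 1) :
    HasDerivAt (blaschkeFactor a) ((1 - ‖a‖ ^ 2 : ℝ) : ℂ)⁻¹ a := by
  have hden := one_sub_conj_mul_ne_zero ha ha
  refine (((hasDerivAt_id' a).sub_const a).div
    (((hasDerivAt_id' a).const_mul (conj a)).const_sub 1) hden).congr_deriv ?_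
  rw [conj_mul'] at hden ⊢
  push_cast
  field_simp
  ring

theorem differentiableAt_blaschkeFactor {a z : ℂ} (h : 1 - conj a * z ≠ 0) :
    DifferentiableAt ℂ (blaschkeFactor a) z :=
  (differentiableAt_id.sub_const a).div ((differentiableAt_id.const_mul _).const_sub 1) h

theorem norm_deriv_mul_le_one_sub_sq_of_mapsTo_ball {f : ℂ → ℂ} {c : ℂ} {R : ℝ}
    (hd : DifferentiableOn ℂ f (ball c R)) (hmaps : MapsTo f (ball c R) (ball 0 1)) (hR : 0 < R) :
    ‖deriv f c‖ * R ≤ 1 - ‖f c‖ ^ 2 := by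
  have hc : c ∈ ball c R := mem_ball_self hR
  have ha : ‖f c‖ < 1 := mem_ball_zero_iff.1 (hmaps hc)
  set ψ := blaschkeFactor (f c) ∘ f
  have hψd : DifferentiableOn ℂ ψ (ball c R) := fun z hz =>
    (differentiableAt_blaschkeFactor (one_sub_conj_mul_ne_zero ha
      (mem_ball_zero_iff.1 (hmaps hz)))).comp_differentiableWithinAt z (hd z hz)
  have hψmaps : MapsTo ψ (ball c R) (closedBall (ψ c) 1) := fun z hz => by
    simpa [ψ, blaschkeFactor_self] using
      (norm_blaschkeFactor_lt_one ha (mem_ball_zero_iff.1 (hmaps hz))).le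
  have hderiv : deriv ψ c = ((1 - ‖f c‖ ^ 2 : ℝ) : ℂ)⁻¹ * deriv f c :=
    ((hasDerivAt_blaschkeFactor_self ha).comp c
      (hd.differentiableAt (isOpen_ball.mem_nhds hc)).hasDerivAt).deriv
  have hpos : 0 < 1 - ‖f c‖ ^ 2 := by nlinarith [norm_nonneg (f c)]
  have hschwarz := norm_deriv_le_div_of_mapsTo_ball hψd hψmaps hR
  rw [hderiv, norm_mul, norm_inv, norm_real, Real.norm_of_nonneg hpos.le, inv_mul_le_iff₀ hpos,
    ← mul_div_assoc, mul_one, le_div_iff₀ hR] at hschwarz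
  exact hschwarz

theorem norm_deriv_mul_le_one_sub_sq_of_mapsTo_closedBall {f : ℂ → ℂ} {c : ℂ} {R : ℝ}
    (hd : DifferentiableOn ℂ f (ball c R)) (hmaps : MapsTo f (ball c R) (closedBall 0 1))
    (hR : 0 < R) : ‖deriv f c‖ * R ≤ 1 - ‖f c‖ ^ 2 := by
  by_cases hopen : MapsTo f (ball c R) (ball 0 1)
  · exact norm_deriv_mul_le_one_sub_sq_of_mapsTo_ball hd hopen hR
  obtain ⟨z₀, hz₀, hz₀_norm⟩ : ∃ z₀ ∈ ball c R, ‖f z₀‖ = 1 := by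
    simp only [MapsTo, mem_ball_zero_iff, not_forall, not_lt] at hopen
    obtain ⟨z₀, hz₀, h⟩ := hopen
    exact ⟨z₀, hz₀, le_antisymm (mem_closedBall_zero_iff.1 (hmaps hz₀)) h⟩
  have hmax : IsMaxOn (norm ∘ f) (ball c R) z₀ := fun z hz => by
    simpa [hz₀_norm] using mem_closedBall_zero_iff.1 (hmaps hz)
  have hconst : EqOn f (Function.const ℂ (f z₀)) (ball c R) :=
    eqOn_of_isPreconnected_of_isMaxOn_norm (convex_ball c R).isPreconnected isOpen_ball hd hz₀ hmax
  have hc : c ∈ ball c R := mem_ball_self hR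
  have hderiv : deriv f c = 0 := by
    rw [(hconst.eventuallyEq_of_mem (isOpen_ball.mem_nhds hc)).deriv_eq]
    exact deriv_const c (f z₀)
  simp [hderiv, hconst hc, hz₀_norm]

theorem AnalyticAt.deriv_deriv_eq_two_smul_deriv_dslope {𝕜 E : Type*} [NontriviallyNormedField 𝕜]
    [NormedAddCommGroup E] [NormedSpace 𝕜 E] [CompleteSpace E] {f : 𝕜 → E} {a : 𝕜}
    (hf : AnalyticAt 𝕜 f a) : deriv (deriv f) a = (2 : 𝕜) • deriv (dslope f a) a := by
  set g := dslope f a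
  obtain ⟨p, hp⟩ := hf
  have hg : AnalyticAt 𝕜 g a := hp.has_fpower_series_dslope_fslope.analyticAt
  have hf_eq : f = fun z => f a + (z - a) • g z := by
    ext z; rw [sub_smul_dslope, add_sub_cancel]
  have hderiv : deriv f =ᶠ[𝓝 a] fun z => g z + (z - a) • deriv g z := by
    filter_upwards [hg.eventually_analyticAt] with z hz
    rw [hf_eq]
    exact (((hasDerivAt_id' z).sub_const a).fun_smul hz.differentiableAt.hasDerivAt).const_add
      (f a) |>.deriv.trans (by simp [add_comm])
  rw [hderiv.deriv_eq, two_smul]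
  refine (hg.differentiableAt.hasDerivAt.fun_add
    (((hasDerivAt_id' a).sub_const a).fun_smul hg.deriv.differentiableAt.hasDerivAt)).deriv.trans ?_
  simp

theorem norm_deriv_deriv_le_two_mul_one_sub_sq {ω : ℂ → ℂ} (hω : AnalyticOnNhd ℂ ω (ball 0 1))
    (h0 : ω 0 = 0) (hmaps : MapsTo ω (ball 0 1) (ball 0 1)) :
    ‖deriv (deriv ω) 0‖ ≤ 2 * (1 - ‖deriv ω 0‖ ^ 2) := by
  have h0B : (0 : ℂ) ∈ ball (0 : ℂ) 1 := mem_ball_self one_pos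
  have hφd : DifferentiableOn ℂ (dslope ω 0) (ball 0 1) :=
    (differentiableOn_dslope (isOpen_ball.mem_nhds h0B)).2 hω.differentiableOn
  have hφmaps : MapsTo (dslope ω 0) (ball 0 1) (closedBall 0 1) := fun z hz => by
    simpa using norm_dslope_le_div_of_mapsTo_ball hω.differentiableOn
      (by rw [h0]; exact hmaps.mono_right ball_subset_closedBall) hz
  have hpick := norm_deriv_mul_le_one_sub_sq_of_mapsTo_closedBall hφd hφmaps one_pos
  rw [mul_one, dslope_same] at hpick
  rw [(hω 0 h0B).deriv_deriv_eq_two_smul_deriv_dslope, smul_eq_mul, norm_mul]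
  norm_num
  linarith

theorem add_one_ne_zero_of_pos_re {w : ℂ} (hw : 0 < w.re) : w + 1 ≠ 0 := fun h => by
  have := congrArg re h
  simp only [add_re, one_re, zero_re] at this
  linarith

theorem norm_sub_one_div_add_one_lt_one {w : ℂ} (hw : 0 < w.re) : ‖(w - 1) / (w + 1)‖ < 1 := by
  have hne := add_one_ne_zero_of_pos_re hw
  rw [norm_div, div_lt_one (norm_pos_iff.2 hne), ← sq_lt_sq₀ (norm_nonneg _) (norm_nonneg _),
    Complex.sq_norm, Complex.sq_norm]
  simp only [normSq_apply, sub_re, sub_im, add_re, add_im, one_re, one_im]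
  nlinarith

theorem deriv_sub_one_div_add_one {h : ℂ → ℂ} {z : ℂ} (hd : DifferentiableAt ℂ h z)
    (hz : h z + 1 ≠ 0) :
    deriv (fun z => (h z - 1) / (h z + 1)) z = 2 * deriv h z / (h z + 1) ^ 2 := by
  rw [deriv_fun_div (hd.sub_const 1) (hd.add_const 1) hz, deriv_sub_const, deriv_add_const]
  ring

theorem AnalyticAt.deriv_deriv_sub_one_div_add_one {h : ℂ → ℂ} {a : ℂ} (hh : AnalyticAt ℂ h a)
    (ha : h a = 1) :
    deriv (deriv (fun z => (h z - 1) / (h z + 1))) a = (deriv (deriv h) a - deriv h a ^ 2) / 2 := by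
  have hne : ∀ᶠ z in 𝓝 a, h z + 1 ≠ 0 :=
    (hh.continuousAt.add continuousAt_const).eventually_ne (by norm_num [ha])
  have hderiv : deriv (fun z => (h z - 1) / (h z + 1)) =ᶠ[𝓝 a]
      fun z => 2 * deriv h z / (h z + 1) ^ 2 := by
    filter_upwards [hh.eventually_analyticAt, hne] with z hz hz_ne
    exact deriv_sub_one_div_add_one hz.differentiableAt hz_ne
  have hd := hh.differentiableAt
  have hd' := hh.deriv.differentiableAt
  rw [hderiv.deriv_eq, deriv_fun_div (d := fun z => (h z + 1) ^ 2) (hd'.const_mul 2)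
    ((hd.add_const 1).pow 2) (by norm_num [ha]), deriv_const_mul _ hd',
    deriv_fun_pow (hd.add_const 1), deriv_add_const, ha]
  ring

theorem norm_deriv_deriv_sub_sq_le_of_pos_re {h : ℂ → ℂ} (hh : AnalyticOnNhd ℂ h (ball 0 1))
    (h0 : h 0 = 1) (hre : ∀ z ∈ ball (0 : ℂ) 1, 0 < (h z).re) :
    ‖deriv (deriv h) 0 - deriv h 0 ^ 2‖ ≤ 4 - ‖deriv h 0‖ ^ 2 := by
  set ω := fun z => (h z - 1) / (h z + 1)
  have hω : AnalyticOnNhd ℂ ω (ball 0 1) := fun z hz =>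
    ((hh z hz).sub analyticAt_const).div ((hh z hz).add analyticAt_const)
      (add_one_ne_zero_of_pos_re (hre z hz))
  have hω0 : ω 0 = 0 := by simp [ω, h0]
  have hmaps : MapsTo ω (ball 0 1) (ball 0 1) := fun z hz =>
    mem_ball_zero_iff.2 (norm_sub_one_div_add_one_lt_one (hre z hz))
  have h0B : (0 : ℂ) ∈ ball (0 : ℂ) 1 := mem_ball_self one_pos
  have key := norm_deriv_deriv_le_two_mul_one_sub_sq hω hω0 hmaps
  rw [(hh 0 h0B).deriv_deriv_sub_one_div_add_one h0, deriv_sub_one_div_add_one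
    (hh 0 h0B).differentiableAt (by norm_num [h0]), h0] at key
  norm_num [norm_div] at key
  nlinarith

theorem exists_norm_le_one_eq_mul {𝕜 : Type*} [NormedDivisionRing 𝕜] {u w : 𝕜}
    (h : ‖u‖ ≤ ‖w‖) : ∃ x : 𝕜, ‖x‖ ≤ 1 ∧ u = x * w := by
  rcases eq_or_ne w 0 with rfl | hw
  · exact ⟨0, by simp, by simpa using h⟩
  · refine ⟨u / w, ?_, (div_mul_cancel₀ u hw).symm⟩
    rw [norm_div]
    exact div_le_one_of_le₀ h (norm_nonneg w)

theorem c2_representation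
    (h : ℂ → ℂ) (c : ℕ → ℂ)
    (hh : AnalyticOn ℂ h (ball 0 1))
    (h0 : h 0 = 1)
    (hre : ∀ z ∈ ball (0:ℂ) 1, 0 < (h z).re)
    (hc : ∀ n, c n = iteratedDeriv n h 0 / (n.factorial : ℂ)) :
    ∃ x : ℂ, ‖x‖ ≤ 1 ∧ 2 * c 2 = c 1 ^ 2 + x * (4 - c 1 ^ 2) := by
  have hc1 : c 1 = deriv h 0 := by simp [hc 1]
  have hc2 : 2 * c 2 = deriv (deriv h) 0 := by
    rw [hc 2, iteratedDeriv_succ, iteratedDeriv_one]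
    norm_num [mul_div_cancel₀]
  have hbound := norm_deriv_deriv_sub_sq_le_of_pos_re
    (isOpen_ball.analyticOn_iff_analyticOnNhd.1 hh) h0 hre
  rw [← hc1, ← hc2] at hbound
  have h4 : 4 - ‖c 1‖ ^ 2 ≤ ‖4 - c 1 ^ 2‖ := by
    simpa [← norm_pow] using norm_sub_norm_le (4 : ℂ) (c 1 ^ 2)
  obtain ⟨x, hx, hxeq⟩ := exists_norm_le_one_eq_mul (hbound.trans h4)
  exact ⟨x, hx, by linear_combination hxeq⟩
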